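/- In a decorated tree, the number of charges placed on leaves equals the number of non-root internal nodes, i.e., the charging process is well defined: every non-root internal node of depth p has a first descendant leaf with label ≤ p−2. -/
import Mathlib


/-- A Dyck word: `true` is an up step `u`, `false` is a down step `d`. -/
def IsDyck (w : List Bool) : Prop :=
  w.count true = w.count false ∧ ∀ k, (w.take k).count false ≤ (w.take k).count true

/-- Position (0-based index) of the `i`-th (1-based) up step of `w`. -/
noncomputable def upPos (w : List Bool) (i : ℕ) : ℕ :=
  sInf {j | w.getD j false = true ∧ (w.take (j + 1)).count true = i}

/-- Position of the down step matching the up step at position `k`: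
the first later down step such that the letters strictly in between form a Dyck word. -/
noncomputable def matchIdx (w : List Bool) (k : ℕ) : ℕ :=
  sInf {m | k < m ∧ w.getD m true = false ∧ IsDyck ((w.drop (k + 1)).take (m - (k + 1)))}

/-- The distance function `D_w(i)`: number of letters between the `i`-th up step and its
matching down step, plus one. -/
noncomputable def distFn (w : List Bool) (i : ℕ) : ℕ :=
  matchIdx w (upPos w i) - upPos w i

/-- One rotation step of the Tamari order on Dyck words: a factor `d · B` (with `B` a
nonempty Dyck word) is replaced by `B · d`. -/
def TamariStep (P Q : List Bool) : Prop :=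
  ∃ A B C : List Bool, IsDyck B ∧ B ≠ [] ∧
    P = A ++ false :: (B ++ C) ∧ Q = A ++ (B ++ false :: C)

/-- The Tamari order on Dyck words: reflexive-transitive closure of rotation steps. -/
def TamariLe : List Bool → List Bool → Prop := Relation.ReflTransGen TamariStep
/-- The type of a Dyck word `w` of size `n`: the word of length `n - 1` over `{N, E}`
(encoded with `true = E`, `false = N`) whose `k`-th letter is `E` iff the letter following
the `k`-th up step of `w` is an up step. -/
noncomputable def typeWord (w : List Bool) : List Bool :=
  (List.range (w.count true - 1)).map (fun k => w.getD (upPos w (k + 1) + 1) false)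

/-- A synchronized interval: a pair of Dyck words of the same size, comparable in the
Tamari order, and with the same type. -/
def Sync (P Q : List Bool) : Prop :=
  IsDyck P ∧ IsDyck Q ∧ P.length = Q.length ∧ TamariLe P Q ∧ typeWord P = typeWord Q
/-- A rooted plane tree whose leaves carry integer labels. -/
inductive PTree : Type where
  | leaf : ℤ → PTree
  | node : List PTree → PTree

/-- The labels of the leaves of a tree, in (counterclockwise) traversal order. -/
def leavesOf : PTree → List ℤ
  | .leaf a => [a]
  | .node [] => []
  | .node (c :: cs) => leavesOf c ++ leavesOf (.node cs)

/-- The number of edges of a tree (internal and external), the root being a node. -/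
def numEdges : PTree → ℕ
  | .leaf _ => 0
  | .node [] => 0
  | .node (c :: cs) => 1 + numEdges c + numEdges (.node cs)

/-- The number of non-root internal nodes of a tree. -/
def internalCount : PTree → ℕ
  | .leaf _ => 0
  | .node [] => 0
  | .node (c :: cs) =>
      (match c with | .node _ => 1 | .leaf _ => 0) + internalCount c + internalCount (.node cs)

/-- The three conditions of decorated trees, for a subtree rooted at depth `d`:
(1) a leaf whose parent has depth `p` has label `≥ -1` and `< p`;
(2) every internal node of depth `d > 0` has a descendant leaf with label `≤ d - 2`;
(3) if a leaf of a subtree rooted at a child of a node of depth `d` has label `d`, then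
all leaves of that subtree preceding it in traversal order have labels `≥ d`. -/
def Cond : PTree → ℕ → Prop
  | .leaf a, d => -1 ≤ a ∧ a + 1 < (d : ℤ)
  | .node cs, d =>
      (0 < d → ∃ a ∈ leavesOf (.node cs), a ≤ (d : ℤ) - 2) ∧
      (∀ c ∈ cs, ∀ i j : ℕ, i < j → j < (leavesOf c).length →
        (leavesOf c).getD j 0 = (d : ℤ) → (d : ℤ) ≤ (leavesOf c).getD i 0) ∧
      (∀ c ∈ cs, Cond c (d + 1))

/-- A decorated tree: a rooted plane tree (rooted at an internal node) with integer
labels on leaves satisfying the three conditions. -/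
def IsDecorated (T : PTree) : Prop :=
  (∃ cs, T = PTree.node cs) ∧ Cond T 0

mutual
/-- The list of charges of the leaves of a subtree rooted at depth `d`, in traversal
order: every leaf starts with charge `0`, and each internal node of depth `d > 0` adds
one charge to its first descendant leaf with label `≤ d - 2`. -/
def chargeList : PTree → ℕ → List ℕ
  | .leaf _, _ => [0]
  | .node cs, d =>
      let base := chargeConcat cs (d + 1)
      if d = 0 then base
      else
        let i := (leavesOf (.node cs)).findIdx (fun a => decide (a ≤ (d : ℤ) - 2))
        base.set i (base.getD i 0 + 1)

/-- Charges of a forest of subtrees, all rooted at depth `d`. -/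
def chargeConcat : List PTree → ℕ → List ℕ
  | [], _ => []
  | c :: cs, d => chargeList c d ++ chargeConcat cs d
end

/-- Builds the lower path `P(T)` by traversal, consuming the list of leaf charges:
each edge contributes an up step `u = true` when first visited, and a leaf of charge `k`
contributes `u·d^(1+k)`. Returns the word and the unconsumed charges. -/
def buildP : PTree → List ℕ → List Bool × List ℕ
  | .leaf _, ks => (List.replicate (ks.headD 0 + 1) false, ks.tail)
  | .node [], ks => ([], ks)
  | .node (c :: cs), ks =>
      let r1 := buildP c ks
      let r2 := buildP (.node cs) r1.2
      (true :: (r1.1 ++ r2.1), r2.2)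

/-- The lower Dyck path `P(T)` of a decorated tree, via the charge construction. -/
def Pword (T : PTree) : List Bool := (buildP T (chargeList T 0)).1

/-- The upper Dyck path `Q(T)`: the depth evolution of the traversal of `T`
(`true` = down an edge, `false` = up an edge). -/
def Qword : PTree → List Bool
  | .leaf _ => []
  | .node [] => []
  | .node (c :: cs) => (true :: (Qword c ++ [false])) ++ Qword (.node cs)

/-- Every non-root internal node (depth `d > 0`) has a descendant leaf with
label `≤ d - 2` (so the charging process is well defined). -/
def NodesHaveTarget : PTree → ℕ → Prop
  | .leaf _, _ => True
  | .node cs, d =>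
      (0 < d → ∃ a ∈ leavesOf (.node cs), a ≤ (d : ℤ) - 2) ∧
      ∀ c ∈ cs, NodesHaveTarget c (d + 1)

theorem sum_set_succ : ∀ (l : List ℕ) (i : ℕ), i < l.length →
    (l.set i (l.getD i 0 + 1)).sum = l.sum + 1 := by
  intro l
  induction l with
  | nil => intro i h; simp at h
  | cons a l ih =>
    intro i h
    cases i with
    | zero => simp [List.getD]; omega
    | succ i =>
      simp only [List.set, List.getD_cons_succ, List.sum_cons]
      rw [ih i (by simpa using h)]
      omega

mutual
theorem chargeList_length : ∀ (t : PTree) (d : ℕ),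
    (chargeList t d).length = (leavesOf t).length
  | .leaf a, d => by simp [chargeList, leavesOf]
  | .node cs, d => by
    simp only [chargeList]
    split <;> simp [List.length_set, chargeConcat_length cs (d + 1)]

theorem chargeConcat_length : ∀ (cs : List PTree) (d : ℕ),
    (chargeConcat cs d).length = (leavesOf (.node cs)).length
  | [], d => by simp [chargeConcat, leavesOf]
  | c :: cs, d => by
    simp [chargeConcat, leavesOf, chargeList_length c d, chargeConcat_length cs d]
end

def indNode : PTree → ℕ
  | .leaf _ => 0
  | .node _ => 1

mutual
theorem sum_chargeList : ∀ (t : PTree) (d : ℕ), d ≠ 0 → Cond t d →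
    (chargeList t d).sum = internalCount t + indNode t
  | .leaf a, d, _, _ => by simp [chargeList, internalCount, indNode]
  | .node cs, d, hd, hc => by
    rw [Cond] at hc
    have hbase := sum_chargeConcat cs (d + 1) (by omega) hc.2.2
    have hlen := chargeConcat_length cs (d + 1)
    have hex : ∃ a ∈ leavesOf (.node cs), a ≤ (d : ℤ) - 2 := hc.1 (by omega)
    have hfind : (leavesOf (.node cs)).findIdx (fun a => decide (a ≤ (d : ℤ) - 2)) <
        (leavesOf (.node cs)).length := by
      apply List.findIdx_lt_length_of_exists
      obtain ⟨a, ha, hle⟩ := hex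
      exact ⟨a, ha, by simpa using hle⟩
    simp only [chargeList, if_neg hd]
    rw [sum_set_succ _ _ (by rw [hlen]; exact hfind), hbase, indNode]

theorem sum_chargeConcat : ∀ (cs : List PTree) (d : ℕ), d ≠ 0 →
    (∀ c ∈ cs, Cond c d) →
    (chargeConcat cs d).sum = internalCount (.node cs)
  | [], d, _, _ => by simp [chargeConcat, internalCount]
  | c :: cs, d, hd, hc => by
    have h1 := sum_chargeList c d hd (hc c (by simp))
    have h2 := sum_chargeConcat cs d hd (fun c' hc' => hc c' (by simp [hc']))
    cases c <;>
      simp only [chargeConcat, List.sum_append, h1, h2, internalCount, indNode] <;> omega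
end

theorem cond_nht : ∀ (t : PTree) (d : ℕ), Cond t d → NodesHaveTarget t d
  | .leaf a, d, _ => by rw [NodesHaveTarget]; trivial
  | .node cs, d, hc => by
    rw [Cond] at hc
    rw [NodesHaveTarget]
    exact ⟨hc.1, fun c hmem => cond_nht c (d + 1) (hc.2.2 c hmem)⟩
termination_by t => sizeOf t
decreasing_by
  simp_wf
  have := List.sizeOf_lt_of_mem hmem
  omega

/-- In a decorated tree, the charging process is well defined and the total number of
charges placed on leaves equals the number of non-root internal nodes. -/
theorem charges_well_defined (T : PTree) (h : IsDecorated T) :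
    NodesHaveTarget T 0 ∧ (chargeList T 0).sum = internalCount T := by
  obtain ⟨⟨cs, rfl⟩, hc⟩ := h
  refine ⟨cond_nht _ 0 hc, ?_⟩
  rw [Cond] at hc
  simp only [chargeList, if_pos rfl]
  exact sum_chargeConcat cs 1 one_ne_zero hc.2.2
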